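/- For every k ∈ ℕ, the piecewise-defined function ψ_k : ℝ → ℝ given by ψ_k(s) = 0 for s ≤ 1/k; ψ_k(s) = (8k²/9)(s - 1/k)³ for 1/k < s ≤ 5/(4k); ψ_k(s) = (2k/3)(s - 5/(4k))² + (1/6)(s - 5/(4k)) + 1/(72k) for 5/(4k) < s ≤ 7/(4k); ψ_k(s) = -(8k²/9)(s - 2/k)³ + s - 3/(2k) for 7/(4k) < s ≤ 2/k; and ψ_k(s) = s - 3/(2k) for s > 2/k, is C² on ℝ, and satisfies the pointwise bound |ψ_k(s)| · |ψ_k''(s)| ≤ (1/(2k)) · (4k/3) · 1_{[1/k, 2/k]}(s) ≤ 1_{[1/k, 2/k]}(s) for all s ∈ ℝ. -/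

import Mathlib

/-!
Since `ψ_k(s) = ψ_1(k s) / k`, we have `|ψ_k(s)| · |ψ_k''(s)| = |ψ_1(k s)| · |ψ_1''(k s)|`, so
everything reduces to `k = 1`. There `ψ_1` is glued from polynomial pieces whose values and
first two derivatives agree at the breakpoints `1, 5/4, 7/4, 2`; gluing twice gives `ψ_1'` and
`ψ_1''` explicitly, and `ψ_1''` is continuous. On `[1, 2]` we have `0 ≤ ψ_1 ≤ 1/2` and
`0 ≤ ψ_1'' ≤ 4/3`; to the left of `1` the function vanishes, to the right of `2` it is affine.
-/

open Set

noncomputable section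

/-- The penalization function `ψ_k` from the penalized approximation
(equation (5.2) of the paper). -/
def psiPen (k : ℕ) (s : ℝ) : ℝ :=
  if s ≤ 1 / (k : ℝ) then 0
  else if s ≤ 5 / (4 * (k : ℝ)) then (8 * (k : ℝ) ^ 2 / 9) * (s - 1 / (k : ℝ)) ^ 3
  else if s ≤ 7 / (4 * (k : ℝ)) then
    (2 * (k : ℝ) / 3) * (s - 5 / (4 * (k : ℝ))) ^ 2
      + (1 / 6) * (s - 5 / (4 * (k : ℝ))) + 1 / (72 * (k : ℝ))
  else if s ≤ 2 / (k : ℝ) then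
    -(8 * (k : ℝ) ^ 2 / 9) * (s - 2 / (k : ℝ)) ^ 3 + s - 3 / (2 * (k : ℝ))
  else s - 3 / (2 * (k : ℝ))

theorem hasDerivAt_ite_le {F : Type*} [NormedAddCommGroup F] [NormedSpace ℝ F]
    {f g f' g' : ℝ → F} {a : ℝ}
    (hf : ∀ x, HasDerivAt f (f' x) x) (hg : ∀ x, HasDerivAt g (g' x) x)
    (h : f a = g a) (h' : f' a = g' a) (x : ℝ) :
    HasDerivAt (fun x => if x ≤ a then f x else g x) (if x ≤ a then f' x else g' x) x := by
  rcases lt_trichotomy x a with hx | rfl | hx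
  · rw [if_pos hx.le]
    refine (hf x).congr_of_eventuallyEq ?_
    filter_upwards [Iio_mem_nhds hx] with y hy
    rw [if_pos hy.le]
  · rw [if_pos le_rfl]
    have hl : HasDerivWithinAt (fun y => if y ≤ x then f y else g y) (f' x) (Iic x) x :=
      (hf x).hasDerivWithinAt.congr (fun y hy => if_pos hy) (if_pos le_rfl)
    have hr : HasDerivWithinAt (fun y => if y ≤ x then f y else g y) (f' x) (Ici x) x := by
      refine h' ▸ (hg x).hasDerivWithinAt.congr (fun y hy => ?_) (by rw [if_pos le_rfl, h])
      rcases (mem_Ici.mp hy).eq_or_lt with rfl | hxy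
      · rw [if_pos le_rfl, h]
      · rw [if_neg hxy.not_ge]
    simpa only [Iic_union_Ici, hasDerivWithinAt_univ] using hl.union hr
  · rw [if_neg hx.not_ge]
    refine (hg x).congr_of_eventuallyEq ?_
    filter_upwards [Ioi_mem_nhds hx] with y hy
    rw [if_neg hy.not_ge]

theorem contDiff_two_of_hasDerivAt {𝕜 F : Type*} [NontriviallyNormedField 𝕜]
    [NormedAddCommGroup F] [NormedSpace 𝕜 F] {f f' f'' : 𝕜 → F}
    (hf : ∀ x, HasDerivAt f (f' x) x) (hf' : ∀ x, HasDerivAt f' (f'' x) x)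
    (hf'' : Continuous f'') : ContDiff 𝕜 2 f := by
  have e : deriv f = f' := funext fun x => (hf x).deriv
  have e' : deriv f' = f'' := funext fun x => (hf' x).deriv
  rw [show (2 : WithTop ℕ∞) = 1 + 1 from rfl, contDiff_succ_iff_deriv, e,
    contDiff_one_iff_deriv, e']
  exact ⟨fun x => (hf x).differentiableAt, by simp, fun x => (hf' x).differentiableAt, hf''⟩

namespace PsiPen

/-- `ψ_1`, with the breakpoints written as plain numerals. -/
def profile (x : ℝ) : ℝ :=
  if x ≤ 1 then 0
  else if x ≤ 5 / 4 then 8 / 9 * (x - 1) ^ 3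
  else if x ≤ 7 / 4 then 2 / 3 * (x - 5 / 4) ^ 2 + 1 / 6 * (x - 5 / 4) + 1 / 72
  else if x ≤ 2 then -(8 / 9) * (x - 2) ^ 3 + x - 3 / 2
  else x - 3 / 2

def profileDeriv (x : ℝ) : ℝ :=
  if x ≤ 1 then 0
  else if x ≤ 5 / 4 then 8 / 3 * (x - 1) ^ 2
  else if x ≤ 7 / 4 then 4 / 3 * (x - 5 / 4) + 1 / 6
  else if x ≤ 2 then -(8 / 3) * (x - 2) ^ 2 + 1
  else 1

def profileDeriv2 (x : ℝ) : ℝ :=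
  if x ≤ 1 then 0
  else if x ≤ 5 / 4 then 16 / 3 * (x - 1)
  else if x ≤ 7 / 4 then 4 / 3
  else if x ≤ 2 then -(16 / 3) * (x - 2)
  else 0

theorem hasDerivAt_profile (x : ℝ) : HasDerivAt profile (profileDeriv x) x := by
  have d1 (y : ℝ) : HasDerivAt (fun x => 8 / 9 * (x - 1) ^ 3) (8 / 3 * (y - 1) ^ 2) y :=
    (((hasDerivAt_id' y).sub_const 1).fun_pow 3).const_mul (8 / 9 : ℝ) |>.congr_deriv (by ring)
  have d2 (y : ℝ) : HasDerivAt (fun x => 2 / 3 * (x - 5 / 4) ^ 2 + 1 / 6 * (x - 5 / 4) + 1 / 72)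
      (4 / 3 * (y - 5 / 4) + 1 / 6) y :=
    ((((hasDerivAt_id' y).sub_const (5 / 4)).fun_pow 2 |>.const_mul (2 / 3 : ℝ)).add
      (((hasDerivAt_id' y).sub_const (5 / 4)).const_mul (1 / 6 : ℝ)) |>.add_const (1 / 72))
      |>.congr_deriv (by ring)
  have d3 (y : ℝ) : HasDerivAt (fun x => -(8 / 9) * (x - 2) ^ 3 + x - 3 / 2)
      (-(8 / 3) * (y - 2) ^ 2 + 1) y :=
    (((((hasDerivAt_id' y).sub_const 2).fun_pow 3).const_mul (-(8 / 9) : ℝ)).add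
      (hasDerivAt_id' y)).sub_const (3 / 2) |>.congr_deriv (by ring)
  have d4 (y : ℝ) : HasDerivAt (fun x : ℝ => x - 3 / 2) 1 y := (hasDerivAt_id' y).sub_const _
  exact hasDerivAt_ite_le (hasDerivAt_const · 0) (hasDerivAt_ite_le d1 (hasDerivAt_ite_le d2
    (hasDerivAt_ite_le d3 d4 (by norm_num) (by norm_num)) (by norm_num) (by norm_num))
    (by norm_num) (by norm_num)) (by norm_num) (by norm_num) x

theorem hasDerivAt_profileDeriv (x : ℝ) : HasDerivAt profileDeriv (profileDeriv2 x) x := by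
  have d1 (y : ℝ) : HasDerivAt (fun x => 8 / 3 * (x - 1) ^ 2) (16 / 3 * (y - 1)) y :=
    (((hasDerivAt_id' y).sub_const 1).fun_pow 2).const_mul (8 / 3 : ℝ) |>.congr_deriv (by ring)
  have d2 (y : ℝ) : HasDerivAt (fun x => 4 / 3 * (x - 5 / 4) + 1 / 6) (4 / 3) y :=
    (((hasDerivAt_id' y).sub_const (5 / 4)).const_mul (4 / 3 : ℝ)).add_const (1 / 6)
      |>.congr_deriv (by ring)
  have d3 (y : ℝ) : HasDerivAt (fun x => -(8 / 3) * (x - 2) ^ 2 + 1) (-(16 / 3) * (y - 2)) y :=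
    ((((hasDerivAt_id' y).sub_const 2).fun_pow 2).const_mul (-(8 / 3) : ℝ)).add_const 1
      |>.congr_deriv (by ring)
  exact hasDerivAt_ite_le (hasDerivAt_const · 0) (hasDerivAt_ite_le d1 (hasDerivAt_ite_le d2
    (hasDerivAt_ite_le d3 (hasDerivAt_const · 1) (by norm_num) (by norm_num)) (by norm_num)
    (by norm_num)) (by norm_num) (by norm_num)) (by norm_num) (by norm_num) x

theorem continuous_profileDeriv2 : Continuous profileDeriv2 := by
  unfold profileDeriv2
  apply continuous_const.if_le _ continuous_id continuous_const (by rintro _ rfl; norm_num)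
  apply Continuous.if_le (by fun_prop) _ continuous_id continuous_const (by rintro _ rfl; norm_num)
  apply continuous_const.if_le _ continuous_id continuous_const (by rintro _ rfl; norm_num)
  exact Continuous.if_le (by fun_prop) continuous_const continuous_id continuous_const
    (by rintro _ rfl; norm_num)

theorem contDiff_profile : ContDiff ℝ 2 profile :=
  contDiff_two_of_hasDerivAt hasDerivAt_profile hasDerivAt_profileDeriv continuous_profileDeriv2

theorem profile_eq_zero {x : ℝ} (hx : x ≤ 1) : profile x = 0 := if_pos hx

theorem profileDeriv2_eq_zero {x : ℝ} (hx : 2 < x) : profileDeriv2 x = 0 := by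
  rw [profileDeriv2, if_neg (by linarith), if_neg (by linarith), if_neg (by linarith),
    if_neg (by linarith)]

theorem profile_mem_Icc {x : ℝ} (hx : x ≤ 2) : profile x ∈ Icc 0 (1 / 2) := by
  unfold profile
  split_ifs
  · exact ⟨le_rfl, by norm_num⟩
  · have ht : 0 ≤ x - 1 := by linarith
    have ht' : (x - 1) ^ 3 ≤ (1 / 4) ^ 3 := pow_le_pow_left₀ ht (by linarith) 3
    exact ⟨by positivity, by linarith⟩
  · constructor <;> nlinarith
  · have hv : 0 ≤ (2 - x) ^ 3 := pow_nonneg (by linarith) 3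
    constructor <;> nlinarith [sq_nonneg (x - 2)]

theorem profileDeriv2_mem_Icc (x : ℝ) : profileDeriv2 x ∈ Icc 0 (4 / 3) := by
  unfold profileDeriv2
  split_ifs <;> constructor <;> linarith

theorem abs_profile_mul_abs_profileDeriv2_le (x : ℝ) :
    |profile x| * |profileDeriv2 x| ≤ 2 / 3 * (Icc 1 2).indicator (fun _ => 1) x := by
  by_cases hx : x ∈ Icc 1 2
  · obtain ⟨h0, h1⟩ := profile_mem_Icc hx.2
    obtain ⟨h2, h3⟩ := profileDeriv2_mem_Icc x
    rw [indicator_of_mem hx, abs_of_nonneg h0, abs_of_nonneg h2]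
    linarith [mul_le_mul h1 h3 h2 (by norm_num : (0 : ℝ) ≤ 1 / 2)]
  · rw [indicator_of_notMem hx, mul_zero]
    rcases not_and_or.mp hx with hx | hx
    · rw [profile_eq_zero (not_le.mp hx).le, abs_zero, zero_mul]
    · rw [profileDeriv2_eq_zero (not_le.mp hx), abs_zero, mul_zero]

theorem psiPen_eq_profile {k : ℕ} (hk : 0 < k) (s : ℝ) : psiPen k s = profile (k * s) / k := by
  have hk' : (0 : ℝ) < k := by exact_mod_cast hk
  have key (c : ℝ) : s ≤ c / k ↔ k * s ≤ c := by rw [le_div_iff₀ hk', mul_comm]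
  have h5 : 5 / (4 * (k : ℝ)) = 5 / 4 / k := by ring
  have h7 : 7 / (4 * (k : ℝ)) = 7 / 4 / k := by ring
  simp only [psiPen, profile, h5, h7, key]
  split_ifs
  · exact (zero_div _).symm
  all_goals field_simp

theorem deriv_deriv_psiPen {k : ℕ} (hk : 0 < k) (s : ℝ) :
    deriv (deriv (psiPen k)) s = k * profileDeriv2 (k * s) := by
  have hk' : (k : ℝ) ≠ 0 := by positivity
  have h : deriv (psiPen k) = fun s => profileDeriv (k * s) := by
    funext s
    rw [funext (psiPen_eq_profile hk), deriv_div_const, deriv_comp_mul_left,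
      (hasDerivAt_profile _).deriv, smul_eq_mul, mul_div_cancel_left₀ _ hk']
  rw [h, deriv_comp_mul_left, (hasDerivAt_profileDeriv _).deriv, smul_eq_mul]

end PsiPen

open PsiPen in
/-- For every `k ∈ ℕ`, `ψ_k` is `C²` on `ℝ` and satisfies
`|ψ_k(s)| · |ψ_k''(s)| ≤ (1/(2k)) · (4k/3) · 1_{[1/k,2/k]}(s) ≤ 1_{[1/k,2/k]}(s)`
for all `s ∈ ℝ`. -/
theorem statement12 (k : ℕ) (hk : 0 < k) :
    ContDiff ℝ 2 (psiPen k) ∧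
    ∀ s : ℝ,
      |psiPen k s| * |deriv (deriv (psiPen k)) s|
        ≤ (1 / (2 * (k : ℝ))) * (4 * (k : ℝ) / 3)
            * (Icc (1 / (k : ℝ)) (2 / (k : ℝ))).indicator (fun _ => (1:ℝ)) s ∧
      (1 / (2 * (k : ℝ))) * (4 * (k : ℝ) / 3)
            * (Icc (1 / (k : ℝ)) (2 / (k : ℝ))).indicator (fun _ => (1:ℝ)) s
        ≤ (Icc (1 / (k : ℝ)) (2 / (k : ℝ))).indicator (fun _ => (1:ℝ)) s := by
  have hk' : (0 : ℝ) < k := by exact_mod_cast hk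
  have hψ : psiPen k = fun s => profile (k * s) / k := funext (psiPen_eq_profile hk)
  have hc : 1 / (2 * (k : ℝ)) * (4 * k / 3) = 2 / 3 := by field_simp; ring
  have hind (s : ℝ) : (Icc (1 / (k : ℝ)) (2 / k)).indicator (fun _ => (1 : ℝ)) s
      = (Icc 1 2).indicator (fun _ => 1) (k * s) := by
    rw [← preimage_const_mul_Icc₀ _ _ hk']
    exact indicator_comp_right (g := fun _ : ℝ => (1 : ℝ)) _
  refine ⟨hψ ▸ (contDiff_profile.comp (contDiff_const.mul contDiff_id)).div_const _,
    fun s => ⟨?_, ?_⟩⟩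
  · rw [hc, hind, deriv_deriv_psiPen hk, psiPen_eq_profile hk, abs_div, abs_mul,
      abs_of_pos hk']
    calc |profile (k * s)| / k * (k * |profileDeriv2 (k * s)|)
        = |profile (k * s)| * |profileDeriv2 (k * s)| := by field_simp
      _ ≤ 2 / 3 * (Icc 1 2).indicator (fun _ => 1) (k * s) :=
        abs_profile_mul_abs_profileDeriv2_le _
  · rw [hc]
    exact mul_le_of_le_one_left (indicator_nonneg (fun _ _ => zero_le_one' ℝ) s) (by norm_num)
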